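/- For ε > 0, let F(ε) = ε²/(ε² + ε²)^{3/2} − (ε + ε³)²/((ε + ε³)² + ε²)^{3/2}. Then F(ε) → 0 as ε → 0⁺, while G(ε) = ε²/(2ε²)^{3/2} → +∞ as ε → 0⁺. -/

import Mathlib

/-! Both terms of `F ε` have the form `ε² b / (a ε²)^{3/2} = b a^{-3/2} / ε`, so
`F ε = (ψ 0 - ψ (ε²)) / ε` with `ψ t = (1 + t)² / ((1 + t)² + 1)^{3/2}` smooth near `0`.
Since `ε ↦ ψ (ε²)` has derivative `0` at `0`, this difference quotient tends to `0`,
while `G ε = 2^{-3/2} / ε` blows up. -/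

open Filter Topology

lemma sq_mul_div_rpow_three_halves {ε : ℝ} (hε : 0 < ε) {a : ℝ} (ha : 0 ≤ a) (b : ℝ) :
    ε ^ 2 * b / (a * ε ^ 2) ^ ((3:ℝ)/2) = b / a ^ ((3:ℝ)/2) / ε := by
  have hε3 : (ε ^ 2) ^ ((3:ℝ)/2) = ε ^ 3 := by
    rw [← Real.rpow_natCast ε 2, ← Real.rpow_mul hε.le, ← Real.rpow_natCast ε 3]
    norm_num
  rw [Real.mul_rpow ha (sq_nonneg ε), hε3]
  field_simp

lemma tendsto_sub_comp_sq_div_self {ψ : ℝ → ℝ} (hψ : DifferentiableAt ℝ ψ 0) :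
    Tendsto (fun ε => (ψ (ε ^ 2) - ψ 0) / ε) (𝓝[≠] 0) (𝓝 0) := by
  have hderiv : HasDerivAt (fun ε : ℝ => ψ (ε ^ 2)) 0 0 := by
    have hsq : HasDerivAt (fun ε : ℝ => ε ^ 2) 0 0 := by simpa using hasDerivAt_pow 2 (0:ℝ)
    have hcomp := hψ.hasDerivAt.comp_of_eq 0 hsq (zero_pow two_ne_zero).symm
    rwa [mul_zero] at hcomp
  refine (hasDerivAt_iff_tendsto_slope.mp hderiv).congr fun ε => ?_
  simp [slope_def_field]

noncomputable def fluxProfile (t : ℝ) : ℝ :=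
  (1 + t) ^ 2 / ((1 + t) ^ 2 + 1) ^ ((3:ℝ)/2)

lemma differentiableAt_fluxProfile_zero : DifferentiableAt ℝ fluxProfile 0 := by
  unfold fluxProfile
  refine DifferentiableAt.div (by fun_prop) ?_ (by positivity)
  exact DifferentiableAt.rpow_const (by fun_prop) (Or.inl (by positivity))

lemma fluxProfile_zero : fluxProfile 0 = 1 / 2 ^ ((3:ℝ)/2) := by
  norm_num [fluxProfile]

theorem flux_difference_limits
    (F G : ℝ → ℝ)
    (hF : ∀ ε : ℝ, F ε = ε ^ 2 / (ε ^ 2 + ε ^ 2) ^ ((3:ℝ)/2)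
        - (ε + ε ^ 3) ^ 2 / ((ε + ε ^ 3) ^ 2 + ε ^ 2) ^ ((3:ℝ)/2))
    (hG : ∀ ε : ℝ, G ε = ε ^ 2 / (2 * ε ^ 2) ^ ((3:ℝ)/2)) :
    Tendsto F (𝓝[>] 0) (𝓝 0) ∧ Tendsto G (𝓝[>] 0) atTop := by
  constructor
  · have hlim := (tendsto_sub_comp_sq_div_self differentiableAt_fluxProfile_zero).neg.mono_left
      (nhdsWithin_mono _ fun x hx => ne_of_gt hx)
    rw [neg_zero] at hlim
    refine hlim.congr' (eventually_nhdsWithin_of_forall fun ε (hε : 0 < ε) => ?_)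
    have h1 : ε ^ 2 / (ε ^ 2 + ε ^ 2) ^ ((3:ℝ)/2) = fluxProfile 0 / ε := by
      rw [fluxProfile_zero, ← sq_mul_div_rpow_three_halves hε zero_le_two]
      ring_nf
    have h2 : (ε + ε ^ 3) ^ 2 / ((ε + ε ^ 3) ^ 2 + ε ^ 2) ^ ((3:ℝ)/2)
        = fluxProfile (ε ^ 2) / ε := by
      rw [fluxProfile, ← sq_mul_div_rpow_three_halves hε (by positivity)]
      ring_nf
    rw [hF, h1, h2]
    ring
  · have hpos : (0:ℝ) < 1 / 2 ^ ((3:ℝ)/2) := by positivity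
    refine (tendsto_inv_nhdsGT_zero.const_mul_atTop hpos).congr'
      (eventually_nhdsWithin_of_forall fun ε (hε : 0 < ε) => ?_)
    rw [hG, ← div_eq_mul_inv, ← sq_mul_div_rpow_three_halves hε zero_le_two, mul_one]
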